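/- Let n, p ≥ 1 and 0 < μ ≤ G. For i = 1, …, n let H_i be a real symmetric p×p matrix with (1/G) I_p ⪯ H_i ⪯ (1/μ) I_p. Let y_1, …, y_n ∈ ℝ^p, set ȳ := (1/n)∑_{i=1}^n y_i, d_i := H_i y_i, and d̄ := (1/n)∑_{i=1}^n d_i. Then ⟨ȳ, d̄⟩ ≥ (μ/(2n)) ∑_{i=1}^n ‖d_i‖² − (1/(2nμ)) ∑_{i=1}^n ‖y_i − ȳ‖². -/

import Mathlib

open scoped BigOperators

/-- Spectral (ℓ²-operator) norm of a real matrix. -/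
noncomputable def specNorm {n m : ℕ} (M : Matrix (Fin n) (Fin m) ℝ) : ℝ :=
  ‖LinearMap.toContinuousLinearMap (Matrix.toEuclideanLin M)‖

/-- ℝ^{np}, viewed as n blocks of size p, with the Euclidean norm. -/
abbrev BlockVec (n p : ℕ) : Type := PiLp 2 (fun _ : Fin n => EuclideanSpace ℝ (Fin p))

/-- Block average ā := (1/n) ∑ᵢ aᵢ. -/
noncomputable def blockAvg {n p : ℕ} (a : BlockVec n p) : EuclideanSpace ℝ (Fin p) :=
  (n : ℝ)⁻¹ • ∑ i, a i

/-- 𝟙_n ⊗ x : the block vector all of whose blocks equal x. -/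
def consensus {n p : ℕ} (x : EuclideanSpace ℝ (Fin p)) : BlockVec n p := WithLp.toLp 2 (fun _ => x)

/-- Action of W ⊗ I_p on a block vector. -/
noncomputable def kronApply {n p : ℕ} (W : Matrix (Fin n) (Fin n) ℝ) (a : BlockVec n p) :
    BlockVec n p := WithLp.toLp 2 (fun i => ∑ j, W i j • a j)

/-- The all-ones matrix J_n. -/
def onesMat (n : ℕ) : Matrix (Fin n) (Fin n) ℝ := Matrix.of fun _ _ => 1

open scoped Matrix

lemma smulOnePSD {p : ℕ} {c : ℝ} (hc : 0 ≤ c) :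
    (c • (1 : Matrix (Fin p) (Fin p) ℝ)).PosSemidef := by
  exact Matrix.PosSemidef.one.smul hc

open scoped MatrixOrder in
lemma keyA {p : ℕ} {μ : ℝ} (hμ : 0 < μ) (H : Matrix (Fin p) (Fin p) ℝ)
    (hH : H.PosSemidef)
    (hup : ((μ⁻¹ • (1 : Matrix (Fin p) (Fin p) ℝ)) - H).PosSemidef)
    (x : Fin p → ℝ) :
    μ * (H.mulVec x ⬝ᵥ H.mulVec x) ≤ x ⬝ᵥ H.mulVec x := by
  set S := CFC.sqrt H with hSdef
  have hSS : S * S = H := CFC.sqrt_mul_sqrt_self H hH.nonneg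
  have hSherm : Sᴴ = S := (Matrix.nonneg_iff_posSemidef.mp (CFC.sqrt_nonneg H)).isHermitian.eq
  have hmat : μ⁻¹ • H - H * H = S * (μ⁻¹ • 1 - H) * Sᴴ := by
    rw [hSherm]
    rw [← hSS]
    noncomm_ring
  have hpsd : (μ⁻¹ • H - H * H).PosSemidef := hmat ▸ hup.mul_mul_conjTranspose_same S
  have h0 := hpsd.re_dotProduct_nonneg x
  simp only [RCLike.re_to_real, star_trivial] at h0
  have hT : Hᵀ = H := by
    have := hH.isHermitian.eq
    simpa using this
  have e1 : x ⬝ᵥ (H * H) *ᵥ x = H *ᵥ x ⬝ᵥ H *ᵥ x := by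
    rw [← Matrix.mulVec_mulVec, Matrix.dotProduct_mulVec, ← hT, Matrix.vecMul_transpose, hT]
  have e2 : x ⬝ᵥ (μ⁻¹ • H) *ᵥ x = μ⁻¹ * (x ⬝ᵥ H *ᵥ x) := by
    rw [Matrix.smul_mulVec, dotProduct_smul, smul_eq_mul]
  have hexp : x ⬝ᵥ (μ⁻¹ • H - H * H).mulVec x
      = μ⁻¹ * (x ⬝ᵥ H.mulVec x) - H.mulVec x ⬝ᵥ H.mulVec x := by
    rw [Matrix.sub_mulVec, dotProduct_sub, e1, e2]
  rw [hexp] at h0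
  have h1 : H.mulVec x ⬝ᵥ H.mulVec x ≤ μ⁻¹ * (x ⬝ᵥ H.mulVec x) := by linarith
  have h2 := mul_le_mul_of_nonneg_left h1 hμ.le
  rw [← mul_assoc, mul_inv_cancel₀ hμ.ne', one_mul] at h2
  exact h2

lemma inner_eq_dot {p : ℕ} (u v : EuclideanSpace ℝ (Fin p)) :
    (inner ℝ u v : ℝ) = (u : Fin p → ℝ) ⬝ᵥ (v : Fin p → ℝ) := by
  simp [PiLp.inner_apply, dotProduct, RCLike.inner_apply, mul_comm]

theorem stmt12
    (n p : ℕ) (hn : 1 ≤ n) (hp : 1 ≤ p)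
    (G μ : ℝ) (hμ : 0 < μ) (hμG : μ ≤ G)
    (H : Fin n → Matrix (Fin p) (Fin p) ℝ)
    (hHsymm : ∀ i, (H i).IsSymm)
    (hHlow : ∀ i, (H i - G⁻¹ • 1).PosSemidef)
    (hHup : ∀ i, ((μ⁻¹ • (1 : Matrix (Fin p) (Fin p) ℝ)) - H i).PosSemidef)
    (y d : Fin n → EuclideanSpace ℝ (Fin p))
    (hd : ∀ i, d i = (H i).mulVec (y i))
    (ybar dbar : EuclideanSpace ℝ (Fin p))
    (hybar : ybar = (n : ℝ)⁻¹ • ∑ i, y i)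
    (hdbar : dbar = (n : ℝ)⁻¹ • ∑ i, d i) :
    (inner ℝ ybar dbar : ℝ) ≥
      μ / (2 * n) * ∑ i, ‖d i‖ ^ 2 - 1 / (2 * n * μ) * ∑ i, ‖y i - ybar‖ ^ 2 := by
  have hG : 0 < G := lt_of_lt_of_le hμ hμG
  have hPSD : ∀ i, (H i).PosSemidef := by
    intro i
    have := (hHlow i).add (smulOnePSD (c := G⁻¹) (by positivity) (p := p))
    simpa using this
  -- per-term strong bound
  have hA : ∀ i, μ * ‖d i‖ ^ 2 ≤ (inner ℝ (y i) (d i) : ℝ) := by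
    intro i
    have hk := keyA hμ (H i) (hPSD i) (hHup i) (y i)
    have hnorm : ‖d i‖ ^ 2 = (inner ℝ (d i) (d i) : ℝ) := (real_inner_self_eq_norm_sq _).symm
    rw [hnorm, inner_eq_dot, inner_eq_dot, hd]
    exact hk
  -- Cauchy-Schwarz + AM-GM bound on cross term
  have hB : ∀ i, -(1 / (2 * μ) * ‖y i - ybar‖ ^ 2) - μ / 2 * ‖d i‖ ^ 2
      ≤ (inner ℝ (ybar - y i) (d i) : ℝ) := by
    intro i
    have hcs : -(‖ybar - y i‖ * ‖d i‖) ≤ (inner ℝ (ybar - y i) (d i) : ℝ) :=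
      neg_le_of_abs_le (abs_real_inner_le_norm _ _)
    have hrev : ‖ybar - y i‖ = ‖y i - ybar‖ := norm_sub_rev _ _
    rw [hrev] at hcs
    have hsq : (0:ℝ) ≤ (‖y i - ybar‖ - μ * ‖d i‖) ^ 2 := sq_nonneg _
    have hamgm : ‖y i - ybar‖ * ‖d i‖ ≤ 1 / (2 * μ) * ‖y i - ybar‖ ^ 2 + μ / 2 * ‖d i‖ ^ 2 := by
      rw [← sub_nonneg]
      have heq : 1 / (2 * μ) * ‖y i - ybar‖ ^ 2 + μ / 2 * ‖d i‖ ^ 2 - ‖y i - ybar‖ * ‖d i‖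
          = (‖y i - ybar‖ - μ * ‖d i‖) ^ 2 / (2 * μ) := by
        field_simp
        ring
      rw [heq]
      positivity
    linarith
  -- decompose inner ℝ ybar dbar
  have hdecomp : (inner ℝ ybar dbar : ℝ) = (n : ℝ)⁻¹ * ∑ i, (inner ℝ ybar (d i) : ℝ) := by
    rw [hdbar, inner_smul_right, inner_sum]
  have hterm : ∀ i, μ / 2 * ‖d i‖ ^ 2 - 1 / (2 * μ) * ‖y i - ybar‖ ^ 2
      ≤ (inner ℝ ybar (d i) : ℝ) := by
    intro i
    have : (inner ℝ ybar (d i) : ℝ) = inner ℝ (y i) (d i) + inner ℝ (ybar - y i) (d i) := by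
      rw [← inner_add_left]
      congr 1
      abel
    rw [this]
    have := hA i
    have := hB i
    linarith
  have hsum : ∑ i, (μ / 2 * ‖d i‖ ^ 2 - 1 / (2 * μ) * ‖y i - ybar‖ ^ 2)
      ≤ ∑ i, (inner ℝ ybar (d i) : ℝ) := Finset.sum_le_sum fun i _ => hterm i
  rw [Finset.sum_sub_distrib, ← Finset.mul_sum, ← Finset.mul_sum] at hsum
  have hn' : (0:ℝ) < (n : ℝ) := by exact_mod_cast hn
  rw [ge_iff_le, hdecomp]
  have := mul_le_mul_of_nonneg_left hsum (by positivity : (0:ℝ) ≤ (n:ℝ)⁻¹)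
  calc μ / (2 * n) * ∑ i, ‖d i‖ ^ 2 - 1 / (2 * n * μ) * ∑ i, ‖y i - ybar‖ ^ 2
      = (n:ℝ)⁻¹ * (μ / 2 * ∑ i, ‖d i‖ ^ 2 - 1 / (2 * μ) * ∑ i, ‖y i - ybar‖ ^ 2) := by
        field_simp
    _ ≤ (n:ℝ)⁻¹ * ∑ i, (inner ℝ ybar (d i) : ℝ) := this
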